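/- Nonlocal Gauss theorem: for the nonlocal divergence \(\mathcal{D}(\nu)(x) = \int_{\overline\Omega}(\nu(x,y)+\nu(y,x))\cdot\alpha(x,y)\,dy\) on \(\Omega\) and the interaction operator \(\mathcal{N}(\nu)(x) = -\int_{\overline\Omega}(\nu(x,y)+\nu(y,x))\cdot\alpha(x,y)\,dy\) on \(\Omega_I\), one has \(\int_{\Omega}\mathcal{D}(\nu)\,dx = \int_{\Omega_I}\mathcal{N}(\nu)\,dx\). -/
import Mathlib


open MeasureTheory
open scoped RealInnerProductSpace

/-- Nonlocal Gauss theorem: `∫_Ω D(ν) = ∫_{Ω_I} N(ν)`. -/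
theorem nonlocal_gauss (d : ℕ)
    (Ω ΩI : Set (EuclideanSpace ℝ (Fin d)))
    (hΩ : MeasurableSet Ω) (hΩI : MeasurableSet ΩI) (hdisj : Disjoint Ω ΩI)
    (α ν : EuclideanSpace ℝ (Fin d) → EuclideanSpace ℝ (Fin d) → EuclideanSpace ℝ (Fin d))
    (hα : ∀ x y, α y x = -α x y)
    (hint : Integrable (fun p : EuclideanSpace ℝ (Fin d) × EuclideanSpace ℝ (Fin d) =>
      ⟪ν p.1 p.2 + ν p.2 p.1, α p.1 p.2⟫)
      ((volume.restrict (Ω ∪ ΩI)).prod (volume.restrict (Ω ∪ ΩI)))) :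
    ∫ x in Ω, ∫ y in Ω ∪ ΩI, ⟪ν x y + ν y x, α x y⟫
      = ∫ x in ΩI, -∫ y in Ω ∪ ΩI, ⟪ν x y + ν y x, α x y⟫ := by
  set f : EuclideanSpace ℝ (Fin d) → EuclideanSpace ℝ (Fin d) → ℝ :=
    fun x y => ⟪ν x y + ν y x, α x y⟫ with hf
  set F : EuclideanSpace ℝ (Fin d) → ℝ := fun x => ∫ y in Ω ∪ ΩI, f x y with hF
  have hanti : ∀ x y, f y x = - f x y := by
    intro x y
    simp only [hf]
    rw [hα x y, inner_neg_right, add_comm (ν y x)]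
  -- the double integral vanishes
  have hswap : ∫ x in Ω ∪ ΩI, F x = ∫ y in Ω ∪ ΩI, ∫ x in Ω ∪ ΩI, f x y :=
    integral_integral_swap hint
  have hzero : ∫ x in Ω ∪ ΩI, F x = 0 := by
    have h2 : ∫ y in Ω ∪ ΩI, ∫ x in Ω ∪ ΩI, f x y
        = - ∫ x in Ω ∪ ΩI, F x := by
      rw [← integral_neg]
      refine integral_congr_ae (Filter.Eventually.of_forall fun y => ?_)
      simp only [hF]
      rw [← integral_neg]
      exact integral_congr_ae (Filter.Eventually.of_forall fun x => (hanti y x))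
    have := hswap.trans h2
    linarith
  -- integrability of F on the union
  have hFint : IntegrableOn F (Ω ∪ ΩI) := hint.integral_prod_left
  have hsplit : ∫ x in Ω ∪ ΩI, F x = (∫ x in Ω, F x) + ∫ x in ΩI, F x :=
    setIntegral_union hdisj hΩI (hFint.mono_set Set.subset_union_left)
      (hFint.mono_set Set.subset_union_right)
  have : (∫ x in Ω, F x) = - ∫ x in ΩI, F x := by
    rw [hsplit] at hzero; linarith
  rw [show (∫ x in ΩI, -F x) = - ∫ x in ΩI, F x from integral_neg F]
  exact this
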